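/- arXiv:1902.00767 — 4 statements merged into one kernel-verified Lean document; each statement's English description precedes it below -/
import Mathlib

section
/- Let k be a field, m, d natural numbers, and a₀, a₁, …, a_d ∈ k distinct elements. Let T^{m+1} = {(a_{t₁}, …, a_{t_{m+1}}) : 0 ≤ t_{m+1} ≤ t_m ≤ … ≤ t₁ ≤ d}. If Q(x₁, …, x_{m+1}) is a polynomial of total degree ≤ d vanishing on T^{m+1}, then Q = 0. -/
/-!
Induct on `d` and on the number of variables. Fixing the first coordinate at the top value
`a_d`, the remaining coordinates run over the staircase for the same `d` in one variable fewer,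
so `Q(a_d, ·) = 0` and `Q = (x₀ - a_d) · Q'` with `deg Q' < deg Q`. At the staircase points
whose indices are all `< d` the factor `x₀ - a_d` does not vanish, so `Q'` vanishes on the
staircase for `a₀, …, a_{d-1}` and is zero by induction on `d`.
-/

open Function

namespace MvPolynomial

section CommSemiring

variable {R : Type*} [CommSemiring R] {n : ℕ}

lemma eq_zero_of_totalDegree_eq_zero_of_eval_eq_zero {σ : Type*} {p : MvPolynomial σ R}
    (hp : p.totalDegree = 0) (x : σ → R) (hx : eval x p = 0) : p = 0 := by
  rw [totalDegree_eq_zero_iff_eq_C] at hp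
  rw [hp, eval_C] at hx
  rw [hp, hx, map_zero]

lemma totalDegree_eval_C_finSuccEquiv_le (f : MvPolynomial (Fin (n + 1)) R) (c : R) :
    ((finSuccEquiv R n f).eval (C c)).totalDegree ≤ f.totalDegree := by
  rw [Polynomial.eval_eq_sum_range]
  refine totalDegree_finsetSum_le fun i _ => ?_
  by_cases hi : (finSuccEquiv R n f).coeff i = 0
  · simp [hi]
  calc _ ≤ ((finSuccEquiv R n f).coeff i).totalDegree + (C c ^ i : MvPolynomial _ R).totalDegree :=
        totalDegree_mul _ _
    _ ≤ f.totalDegree := by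
        rw [← map_pow, totalDegree_C]
        exact le_of_add_le_left (totalDegree_coeff_finSuccEquiv_add_le f i hi)

end CommSemiring

section CommRing

variable {R : Type*} [CommRing R] {n : ℕ}

lemma totalDegree_X_sub_C [Nontrivial R] {σ : Type*} (i : σ) (c : R) :
    (X i - C c : MvPolynomial σ R).totalDegree = 1 := by
  rw [sub_eq_add_neg, ← map_neg, totalDegree_add_eq_left_of_totalDegree_lt] <;>
    simp [totalDegree_X, totalDegree_C]

lemma X_zero_sub_C_dvd {f : MvPolynomial (Fin (n + 1)) R} {c : R}
    (h : (finSuccEquiv R n f).eval (C c) = 0) : X 0 - C c ∣ f := by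
  have hX : finSuccEquiv R n (X 0 - C c) = Polynomial.X - Polynomial.C (C c) := by
    rw [map_sub, finSuccEquiv_X_zero, ← algebraMap_eq, AlgEquiv.commutes]
    rfl
  rw [← map_dvd_iff (finSuccEquiv R n), hX]
  exact Polynomial.dvd_iff_isRoot.mpr h

end CommRing

end MvPolynomial

lemma Fin.antitone_cons_of_le {α : Type*} [Preorder α] {n : ℕ} {a : α} {t : Fin n → α}
    (hta : ∀ i, t i ≤ a) (ht : Antitone t) : Antitone (Fin.cons a t : Fin (n + 1) → α) := by
  intro i j hij
  cases j using Fin.cases with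
  | zero => rw [Fin.le_zero_iff.mp hij]
  | succ j =>
    cases i using Fin.cases with
    | zero => exact hta j
    | succ i => exact ht (Fin.succ_le_succ_iff.mp hij)

open MvPolynomial in
theorem MvPolynomial.eq_zero_of_eval_antitone_eq_zero {R : Type*} [CommRing R] [IsDomain R]
    {n d : ℕ} (a : Fin (d + 1) → R) (ha : Injective a) (Q : MvPolynomial (Fin n) R)
    (hdeg : Q.totalDegree ≤ d) (hQ : ∀ t : Fin n → Fin (d + 1), Antitone t → eval (a ∘ t) Q = 0) :
    Q = 0 := by
  induction d generalizing n with
  | zero =>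
    exact eq_zero_of_totalDegree_eq_zero_of_eval_eq_zero (Nat.le_zero.mp hdeg) _
      (hQ _ (antitone_const (c := 0)))
  | succ d ihd =>
    induction n with
    | zero =>
      exact eq_zero_of_totalDegree_eq_zero_of_eval_eq_zero
        (totalDegree_eq_zero_iff_eq_C.mpr (eq_C_of_isEmpty Q)) _ (hQ _ (antitone_const (c := 0)))
    | succ n ihn =>
      set c := a (Fin.last (d + 1))
      have hc : (finSuccEquiv R n Q).eval (C c) = 0 := by
        refine ihn _ ((totalDegree_eval_C_finSuccEquiv_le Q c).trans hdeg) fun t ht => ?_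
        rw [eval_polynomial_eval_finSuccEquiv, eval_C]
        have := hQ _ (Fin.antitone_cons_of_le (fun i => Fin.le_last _) ht)
        rwa [Fin.comp_cons] at this
      obtain ⟨Q', rfl⟩ := X_zero_sub_C_dvd hc
      rcases eq_or_ne Q' 0 with rfl | hQ'
      · exact mul_zero _
      have hX : (X 0 - C c : MvPolynomial (Fin (n + 1)) R) ≠ 0 := by
        intro h
        simpa [h] using totalDegree_X_sub_C (R := R) (0 : Fin (n + 1)) c
      rw [totalDegree_mul_of_isDomain hX hQ', totalDegree_X_sub_C] at hdeg
      refine absurd (ihd (a ∘ Fin.castSucc) (ha.comp (Fin.castSucc_injective _)) Q' (by omega)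
        fun t ht => ?_) hQ'
      have hne : a (Fin.castSucc (t 0)) - c ≠ 0 :=
        sub_ne_zero.mpr (ha.ne (Fin.castSucc_lt_last _).ne)
      have := hQ (Fin.castSucc ∘ t) (Fin.strictMono_castSucc.monotone.comp_antitone ht)
      rw [eval_mul, eval_sub, eval_X, eval_C] at this
      exact (mul_eq_zero.mp this).resolve_left hne

/-- If a₀,…,a_d are distinct elements of a field k and
Q ∈ k[x₁,…,x_{m+1}] has total degree ≤ d and vanishes at all points
(a_{t₁},…,a_{t_{m+1}}) with d ≥ t₁ ≥ t₂ ≥ … ≥ t_{m+1} ≥ 0, then Q = 0. -/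
theorem stmt2 {k : Type*} [Field k] (m d : ℕ) (a : Fin (d + 1) → k)
    (ha : Function.Injective a)
    (Q : MvPolynomial (Fin (m + 1)) k) (hdeg : Q.totalDegree ≤ d)
    (hvan : ∀ t : Fin (m + 1) → Fin (d + 1),
      (∀ i j : Fin (m + 1), i ≤ j → t j ≤ t i) →
      MvPolynomial.eval (fun i => a (t i)) Q = 0) :
    Q = 0 :=
  MvPolynomial.eq_zero_of_eval_antitone_eq_zero a ha Q hdeg fun t ht => hvan t fun _ _ h => ht h
end

section
/- Let k be a field with |k| > a, let Z ⊆ V be a subset of a k-vector space V that is closed under scalar multiplication (homogeneous: z ∈ Z, t ∈ k implies tz ∈ Z), and let f : Z → k be the restriction of a polynomial of degree ≤ a on V. If the restriction of f to every affine line contained in Z is a polynomial of degree < a, then f is the restriction to Z of a polynomial of degree < a on V. -/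
/-!
Take `P'` to be `P` minus its degree-`a` homogeneous component `P_a`. For `z ∈ Z` the whole line
`t ↦ t • z` lies in `Z`, and along it `P (t • z) = ∑_{d ≤ a} t ^ d P_d z`. This agrees with a
polynomial of degree `< a` at more than `a` points, so its `t ^ a`-coefficient `P_a z` vanishes.
-/

open MvPolynomial

namespace MvPolynomial

variable {σ R : Type*}

section CommSemiring

variable [CommSemiring R]

theorem IsHomogeneous.eval_smul {φ : MvPolynomial σ R} {d : ℕ} (hφ : φ.IsHomogeneous d)
    (t : R) (z : σ → R) : eval (t • z) φ = t ^ d * eval z φ := by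
  simp only [eval_eq, Finset.mul_sum]
  refine Finset.sum_congr rfl fun m hm => ?_
  have hm_deg : ∑ i ∈ m.support, m i = d := by
    simpa [Finsupp.weight_apply, Finsupp.sum] using hφ (mem_support_iff.mp hm)
  simp only [Pi.smul_apply, smul_eq_mul, mul_pow, Finset.prod_mul_distrib,
    Finset.prod_pow_eq_pow_sum, hm_deg]
  ring

theorem IsHomogeneous.eval_zero {φ : MvPolynomial σ R} {d : ℕ} (hφ : φ.IsHomogeneous d)
    (hd : 0 < d) : eval 0 φ = 0 := by
  simpa [zero_pow hd.ne'] using hφ.eval_smul 0 0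

theorem sum_range_homogeneousComponent_of_totalDegree_le {φ : MvPolynomial σ R} {a : ℕ}
    (hφ : φ.totalDegree ≤ a) : ∑ d ∈ Finset.range (a + 1), homogeneousComponent d φ = φ := by
  refine (Finset.sum_subset (Finset.range_subset_range.mpr (by omega)) fun d _ hd => ?_).symm.trans
    (sum_homogeneousComponent φ)
  exact homogeneousComponent_eq_zero d φ (by simp at hd; omega)

theorem totalDegree_sum_range_homogeneousComponent_lt (φ : MvPolynomial σ R) {a : ℕ}
    (ha : 0 < a) : (∑ d ∈ Finset.range a, homogeneousComponent d φ).totalDegree < a := by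
  refine (totalDegree_finsetSum _ _).trans_lt ((Finset.sup_lt_iff ha).mpr fun d hd => ?_)
  exact (homogeneousComponent_isHomogeneous d φ).totalDegree_le.trans_lt (Finset.mem_range.mp hd)

/-- The one-variable polynomial `t ↦ φ (t • z)`. -/
noncomputable def restrictToLine (φ : MvPolynomial σ R) (z : σ → R) : Polynomial R :=
  ∑ d ∈ Finset.range (φ.totalDegree + 1),
    Polynomial.C (eval z (homogeneousComponent d φ)) * Polynomial.X ^ d

variable (φ : MvPolynomial σ R) (z : σ → R)

theorem eval_restrictToLine (t : R) : (φ.restrictToLine z).eval t = eval (t • z) φ := by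
  conv_rhs => rw [← sum_homogeneousComponent φ]
  simp only [restrictToLine, Polynomial.eval_finsetSum, Polynomial.eval_mul, Polynomial.eval_C,
    Polynomial.eval_pow, Polynomial.eval_X, map_sum,
    (homogeneousComponent_isHomogeneous _ φ).eval_smul, mul_comm]

theorem coeff_restrictToLine (d : ℕ) :
    (φ.restrictToLine z).coeff d = eval z (homogeneousComponent d φ) := by
  simp only [restrictToLine, Polynomial.finsetSum_coeff, Polynomial.coeff_C_mul_X_pow,
    Finset.sum_ite_eq, Finset.mem_range]
  split_ifs with hd
  · rfl
  · rw [homogeneousComponent_eq_zero d φ (by omega), map_zero]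

theorem natDegree_restrictToLine_le : (φ.restrictToLine z).natDegree ≤ φ.totalDegree :=
  Polynomial.natDegree_sum_le_of_forall_le _ _ fun d hd =>
    (Polynomial.natDegree_C_mul_X_pow_le _ d).trans (Nat.lt_succ_iff.mp (Finset.mem_range.mp hd))

end CommSemiring

theorem eval_homogeneousComponent_eq_zero_of_eval_smul_eq [CommRing R] [IsDomain R]
    {φ : MvPolynomial σ R} {a : ℕ} {s : Finset R} (hs : a < s.card) (hφ : φ.totalDegree ≤ a)
    {z : σ → R} {p : Polynomial R} (hp : p.natDegree < a)
    (hpz : ∀ t ∈ s, p.eval t = eval (t • z) φ) :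
    eval z (homogeneousComponent a φ) = 0 := by
  have hline : φ.restrictToLine z = p :=
    Polynomial.eq_of_natDegree_lt_card_of_eval_eq' _ _ s
      (fun t ht => by rw [eval_restrictToLine, hpz t ht])
      (max_lt ((natDegree_restrictToLine_le φ z).trans_lt (hφ.trans_lt hs)) (hp.trans hs))
  rw [← coeff_restrictToLine, hline, Polynomial.coeff_eq_zero_of_natDegree_lt hp]

end MvPolynomial

/-- Let k be a field with |k| > a, Z ⊆ k^n a cone (closed under scalar
multiplication), and f the restriction to Z of a polynomial P of degree ≤ a.
If the restriction of f to every affine line contained in Z is a polynomial of degree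
< a in the line parameter, then f is the restriction to Z of a polynomial of degree < a. -/
theorem stmt4 {k : Type*} [Field k] (n a : ℕ) (ha : 1 ≤ a)
    (hk : ∃ s : Finset k, a < s.card)
    (Z : Set (Fin n → k)) (hcone : ∀ z ∈ Z, ∀ t : k, t • z ∈ Z)
    (P : MvPolynomial (Fin n) k) (hdeg : P.totalDegree ≤ a)
    (hweak : ∀ v w : Fin n → k, w ≠ 0 → (∀ t : k, v + t • w ∈ Z) →
      ∃ p : Polynomial k, p.natDegree < a ∧
        ∀ t : k, Polynomial.eval t p = MvPolynomial.eval (v + t • w) P) :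
    ∃ P' : MvPolynomial (Fin n) k, P'.totalDegree < a ∧
      ∀ z ∈ Z, MvPolynomial.eval z P' = MvPolynomial.eval z P := by
  obtain ⟨s, hs⟩ := hk
  refine ⟨∑ d ∈ Finset.range a, homogeneousComponent d P,
    totalDegree_sum_range_homogeneousComponent_lt P ha, fun z hz => ?_⟩
  have htop : eval z (homogeneousComponent a P) = 0 := by
    rcases eq_or_ne z 0 with rfl | hz0
    · exact (homogeneousComponent_isHomogeneous a P).eval_zero ha
    · obtain ⟨p, hp, hpz⟩ := hweak 0 z hz0 fun t => by simpa using hcone z hz t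
      exact eval_homogeneousComponent_eq_zero_of_eval_smul_eq hs hdeg hp fun t _ => by
        simpa using hpz t
  conv_rhs => rw [← sum_range_homogeneousComponent_of_totalDegree_le hdeg]
  rw [Finset.sum_range_succ, map_add, htop, add_zero]
end

section
/- Let k = 𝔽_q be a finite field and Q ∈ k[x,y,z] a nonzero homogeneous polynomial of degree a. Let C_Q be the set of 1-dimensional linear subspaces L ⊆ k³ such that Q restricted to L is identically zero. Then |C_Q| ≤ a(q+1). -/
/-!
Restricted to an affine line `s ↦ w + s • p`, a form `Q` of degree `a` becomes a polynomial in `s`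
of degree at most `a` whose coefficient of `s ^ a` is `Q p`. So if `Q p ≠ 0`, every coset of `k ∙ p`
contains at most `a` zeros of `Q`, and `k ∙ p` itself contains no nonzero zero since
`Q (s • p) = s ^ a * Q p`. Counting nonzero zeros coset by coset and dividing by `q - 1` bounds the
zero lines of `Q` by `a` times the number `q + 1` of points of the projective line `ℙ(k³ ⧸ k ∙ p)`.
If instead `Q` vanishes on all of `k³`, then `a > q`, and the trivial bound
`q² + q + 1 ≤ a (q + 1)` suffices.
-/

open MvPolynomial
open scoped LinearAlgebra.Projectivization

namespace Polynomial

variable {R ι : Type*} [CommSemiring R] (s : Finset ι) (f : ι → Polynomial R) (d : ι → ℕ)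

theorem natDegree_prod_pow_le_sum (hf : ∀ i ∈ s, (f i).natDegree ≤ 1) :
    (∏ i ∈ s, f i ^ d i).natDegree ≤ ∑ i ∈ s, d i :=
  (natDegree_prod_le s _).trans <| Finset.sum_le_sum fun i hi =>
    (natDegree_pow_le_of_le (d i) (hf i hi)).trans (mul_one (d i)).le

theorem coeff_prod_pow_sum_of_natDegree_le_one (hf : ∀ i ∈ s, (f i).natDegree ≤ 1) :
    (∏ i ∈ s, f i ^ d i).coeff (∑ i ∈ s, d i) = ∏ i ∈ s, (f i).coeff 1 ^ d i := by
  classical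
  induction s using Finset.induction_on with
  | empty => simp
  | insert j s hj ih =>
    have hfj : (f j).natDegree ≤ 1 := hf j (s.mem_insert_self j)
    have hfs : ∀ i ∈ s, (f i).natDegree ≤ 1 := fun i hi => hf i (Finset.mem_insert_of_mem hi)
    have hfj_pow : (f j ^ d j).natDegree ≤ d j :=
      (natDegree_pow_le_of_le (d j) hfj).trans (mul_one (d j)).le
    rw [Finset.prod_insert hj, Finset.sum_insert hj, Finset.prod_insert hj,
      coeff_mul_add_eq_of_natDegree_le hfj_pow (natDegree_prod_pow_le_sum s f d hfs), ih hfs,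
      ← coeff_pow_of_natDegree_le hfj, mul_one]

end Polynomial

namespace MvPolynomial

section CommSemiring

variable {R σ : Type*} [CommSemiring R]

noncomputable def restrictLine (Q : MvPolynomial σ R) (w p : σ → R) : Polynomial R :=
  aeval (fun i => Polynomial.C (p i) * Polynomial.X + Polynomial.C (w i)) Q

variable (Q : MvPolynomial σ R) (w p : σ → R)

theorem eval_restrictLine (s : R) : (Q.restrictLine w p).eval s = eval (w + s • p) Q := by
  rw [restrictLine, aeval_def, polynomial_eval_eval₂]
  congr 1
  · ext; simp
  · funext i
    simp only [Polynomial.eval_add, Polynomial.eval_C, Polynomial.eval_mul, Polynomial.eval_X,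
      Pi.add_apply, Pi.smul_apply, smul_eq_mul, mul_comm, add_comm]

variable [Fintype σ]

theorem restrictLine_eq_sum :
    Q.restrictLine w p = ∑ d ∈ Q.support, Polynomial.C (coeff d Q) *
      ∏ i, (Polynomial.C (p i) * Polynomial.X + Polynomial.C (w i)) ^ d i :=
  eval₂_eq' _ _ Q

theorem natDegree_restrictLine_le : (Q.restrictLine w p).natDegree ≤ Q.totalDegree := by
  rw [restrictLine_eq_sum]
  refine Polynomial.natDegree_sum_le_of_forall_le _ _ fun d hd => ?_
  refine (Polynomial.natDegree_C_mul_le _ _).trans ?_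
  refine (Polynomial.natDegree_prod_pow_le_sum _ _ _
    fun _ _ => Polynomial.natDegree_linear_le).trans ?_
  rw [← Finsupp.sum_fintype d (fun _ e => e) (fun _ => rfl)]
  exact le_totalDegree hd

variable {Q} {a : ℕ}

theorem IsHomogeneous.sum_eq_of_mem_support (hQ : Q.IsHomogeneous a) {d : σ →₀ ℕ}
    (hd : d ∈ Q.support) : ∑ i, d i = a := by
  rw [← Finsupp.degree_eq_sum, Finsupp.degree_eq_weight_one]
  exact hQ (mem_support_iff.mp hd)

theorem IsHomogeneous.coeff_restrictLine (hQ : Q.IsHomogeneous a) :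
    (Q.restrictLine w p).coeff a = eval p Q := by
  rw [restrictLine_eq_sum, Polynomial.finsetSum_coeff, eval_eq']
  refine Finset.sum_congr rfl fun d hd => ?_
  rw [Polynomial.coeff_C_mul, ← hQ.sum_eq_of_mem_support hd,
    Polynomial.coeff_prod_pow_sum_of_natDegree_le_one _ _ _
      fun _ _ => Polynomial.natDegree_linear_le]
  simp

theorem IsHomogeneous.eval_smul_s5 (hQ : Q.IsHomogeneous a) (s : R) (v : σ → R) :
    eval (s • v) Q = s ^ a * eval v Q := by
  rw [eval_eq', eval_eq', Finset.mul_sum]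
  refine Finset.sum_congr rfl fun d hd => ?_
  simp only [Pi.smul_apply, smul_eq_mul, mul_pow, Finset.prod_mul_distrib,
    Finset.prod_pow_eq_pow_sum, hQ.sum_eq_of_mem_support hd]
  ring

end CommSemiring

section Field

variable {k σ : Type*} [Field k] [Fintype σ] {Q : MvPolynomial σ k} {a : ℕ} {p : σ → k}

theorem IsHomogeneous.card_le_of_eval_add_smul_eq_zero (hQ : Q.IsHomogeneous a)
    (hp : eval p Q ≠ 0) (w : σ → k) {Z : Finset k} (hZ : ∀ s ∈ Z, eval (w + s • p) Q = 0) :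
    Z.card ≤ a := by
  have hne : Q.restrictLine w p ≠ 0 := fun h => hp <| by
    rw [← hQ.coeff_restrictLine w p, h, Polynomial.coeff_zero]
  calc Z.card ≤ (Q.restrictLine w p).natDegree :=
        Polynomial.card_le_degree_of_subset_roots fun s hs => by
          rw [Polynomial.mem_roots hne, Polynomial.IsRoot, eval_restrictLine]
          exact hZ s hs
    _ ≤ Q.totalDegree := natDegree_restrictLine_le Q w p
    _ ≤ a := hQ.totalDegree_le

theorem IsHomogeneous.eval_ne_zero_of_mem_span_singleton (hQ : Q.IsHomogeneous a)
    (hp : eval p Q ≠ 0) {v : σ → k} (hv : v ∈ k ∙ p) (hv0 : v ≠ 0) : eval v Q ≠ 0 := by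
  obtain ⟨s, rfl⟩ := Submodule.mem_span_singleton.mp hv
  rw [hQ.eval_smul_s5]
  exact mul_ne_zero (pow_ne_zero a (left_ne_zero_of_smul hv0)) hp

theorem IsHomogeneous.card_le_of_forall_sub_mem_span_singleton [Fintype k]
    (hQ : Q.IsHomogeneous a) (hp : eval p Q ≠ 0) (w : σ → k) {Z : Finset (σ → k)}
    (hZ : ∀ v ∈ Z, v - w ∈ k ∙ p ∧ eval v Q = 0) : Z.card ≤ a := by
  classical
  set S := Finset.univ.filter fun s : k => eval (w + s • p) Q = 0
  calc Z.card ≤ (S.image fun s => w + s • p).card := by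
        refine Finset.card_le_card fun v hv => ?_
        obtain ⟨hvw, hv0⟩ := hZ v hv
        obtain ⟨s, hs⟩ := Submodule.mem_span_singleton.mp hvw
        have hv : v = w + s • p := by rw [hs]; abel
        exact Finset.mem_image.mpr ⟨s, by simpa [S, ← hv] using hv0, hv.symm⟩
    _ ≤ S.card := Finset.card_image_le
    _ ≤ a := hQ.card_le_of_eval_add_smul_eq_zero hp w fun s hs => (Finset.mem_filter.mp hs).2

theorem IsHomogeneous.card_nonzero_zeros_le [Fintype k] (hQ : Q.IsHomogeneous a)
    (hp : eval p Q ≠ 0) :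
    Nat.card {v : σ → k // v ≠ 0 ∧ eval v Q = 0} ≤ a * (Nat.card ((σ → k) ⧸ k ∙ p) - 1) := by
  classical
  set π := (k ∙ p).mkQ
  have : Fintype ((σ → k) ⧸ k ∙ p) :=
    have : Finite ((σ → k) ⧸ k ∙ p) := Finite.of_surjective π (Submodule.mkQ_surjective _)
    Fintype.ofFinite _
  set Z := Finset.univ.filter fun v : σ → k => v ≠ 0 ∧ eval v Q = 0
  have hfiber : ∀ c ∈ Z.image π, (Z.filter (π · = c)).card ≤ a := by
    refine Finset.forall_mem_image.mpr fun w _ => ?_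
    refine hQ.card_le_of_forall_sub_mem_span_singleton hp w fun v hv => ?_
    simp only [Z, Finset.mem_filter, Finset.mem_univ, true_and] at hv
    exact ⟨(Submodule.Quotient.eq _).mp hv.2, hv.1.2⟩
  have himage : Z.image π ⊆ Finset.univ.erase 0 := by
    refine Finset.image_subset_iff.mpr fun v hv => ?_
    obtain ⟨hv0, hQv⟩ := (Finset.mem_filter.mp hv).2
    refine Finset.mem_erase.mpr ⟨fun hπv => ?_, Finset.mem_univ _⟩
    exact hQ.eval_ne_zero_of_mem_span_singleton hp
      ((Submodule.Quotient.mk_eq_zero _).mp hπv) hv0 hQv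
  calc Nat.card {v : σ → k // v ≠ 0 ∧ eval v Q = 0} = Z.card := by
        rw [Nat.card_eq_fintype_card, Fintype.card_subtype]
    _ ≤ a * (Z.image π).card := Finset.card_le_mul_card_image Z a hfiber
    _ ≤ a * (Nat.card ((σ → k) ⧸ k ∙ p) - 1) := by
      gcongr
      simpa [Nat.card_eq_fintype_card] using Finset.card_le_card himage

theorem IsHomogeneous.card_lt_of_forall_ne_zero_eval_eq_zero [Nonempty σ] [Fintype k]
    (hQ : Q.IsHomogeneous a) (hQ0 : Q ≠ 0) (h : ∀ v ≠ 0, eval v Q = 0) : Fintype.card k < a := by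
  obtain ⟨u, hu⟩ := exists_ne (0 : σ → k)
  have hzero : ∀ v, eval v Q = 0 := by
    intro v
    obtain rfl | hv := eq_or_ne v 0
    · rw [← zero_smul k u, hQ.eval_smul_s5, h u hu, mul_zero]
    · exact h v hv
  by_contra! ha
  exact hQ0 (hQ.eq_zero_of_forall_eval_eq_zero_of_le_card hzero (by simpa using ha))

end Field

end MvPolynomial

theorem Projectivization.card_setOf_mul_card_units_le {K V : Type*} [DivisionRing K]
    [AddCommGroup V] [Module K V] [Finite V] (P : V → Prop) :
    Nat.card {L : ℙ K V | ∀ v ∈ L.submodule, P v} * Nat.card Kˣ ≤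
      Nat.card {v : V // v ≠ 0 ∧ P v} := by
  rw [← Nat.card_prod]
  refine Nat.card_le_card_of_injective
    (fun x => ⟨(x.2 : K) • x.1.1.rep, smul_ne_zero x.2.ne_zero x.1.1.rep_nonzero,
      x.1.2 _ (Submodule.smul_mem _ _ (x.1.1.submodule_eq ▸ Submodule.mem_span_singleton_self _))⟩)
    ?_
  rintro ⟨⟨L, _⟩, u⟩ ⟨⟨L', _⟩, u'⟩ h
  have h : (u : K) • L.rep = (u' : K) • L'.rep := congrArg Subtype.val h
  obtain rfl : L = L' := by
    rw [← L.mk_rep, ← L'.mk_rep, mk_eq_mk_iff']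
    exact ⟨(u⁻¹ * u' : Kˣ), by rw [Units.val_mul, mul_smul, ← h, ← mul_smul]; simp⟩
  simpa using Units.ext (smul_left_injective K L.rep_nonzero h)

namespace MvPolynomial

variable {k σ : Type*} [Field k] [Fintype k] [Fintype σ] {Q : MvPolynomial σ k} {a : ℕ}

theorem IsHomogeneous.card_zero_lines_le (hQ : Q.IsHomogeneous a) {p : σ → k}
    (hp : eval p Q ≠ 0) :
    Nat.card {L : ℙ k (σ → k) | ∀ v ∈ L.submodule, eval v Q = 0} ≤
      a * Nat.card (ℙ k ((σ → k) ⧸ k ∙ p)) := by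
  have hq : 0 < Nat.card k - 1 := Nat.sub_pos_of_lt Finite.one_lt_card
  refine Nat.le_of_mul_le_mul_right ?_ hq
  calc _ = Nat.card {L : ℙ k (σ → k) | ∀ v ∈ L.submodule, eval v Q = 0} * Nat.card kˣ := by
        rw [Nat.card_units]
    _ ≤ Nat.card {v : σ → k // v ≠ 0 ∧ eval v Q = 0} :=
        Projectivization.card_setOf_mul_card_units_le _
    _ ≤ a * (Nat.card ((σ → k) ⧸ k ∙ p) - 1) := hQ.card_nonzero_zeros_le hp
    _ = a * Nat.card (ℙ k ((σ → k) ⧸ k ∙ p)) * (Nat.card k - 1) := by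
        rw [Projectivization.card k, mul_assoc]

end MvPolynomial

/-- Let k = 𝔽_q and Q ∈ k[x,y,z] a nonzero homogeneous polynomial of
degree a. The set C_Q of lines through the origin in k³ on which Q vanishes
identically has at most a(q+1) elements. -/
theorem stmt5 {k : Type*} [Field k] [Fintype k] (a : ℕ)
    (Q : MvPolynomial (Fin 3) k) (hQ : Q ≠ 0) (hhom : Q.IsHomogeneous a) :
    Nat.card {L : Projectivization k (Fin 3 → k) |
        ∀ v ∈ L.submodule, MvPolynomial.eval v Q = 0}
      ≤ a * (Fintype.card k + 1) := by
  by_cases h : ∃ p ≠ 0, eval p Q ≠ 0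
  · obtain ⟨p, hp0, hp⟩ := h
    have hW : Module.finrank k ((Fin 3 → k) ⧸ k ∙ p) = 2 := by
      rw [Submodule.finrank_quotient, Module.finrank_fin_fun, finrank_span_singleton hp0]
    calc _ ≤ a * Nat.card (ℙ k ((Fin 3 → k) ⧸ k ∙ p)) := hhom.card_zero_lines_le hp
      _ = a * (Fintype.card k + 1) := by
        rw [Projectivization.card_of_finrank_two k _ hW, Nat.card_eq_fintype_card]
  · push Not at h
    have hqa := hhom.card_lt_of_forall_ne_zero_eval_eq_zero hQ h
    calc _ ≤ Nat.card (ℙ k (Fin 3 → k)) := Finite.card_subtype_le _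
      _ = 1 + Fintype.card k + Fintype.card k ^ 2 := by
        rw [Projectivization.card_of_finrank k _ (Module.finrank_fin_fun k)]
        simp [Finset.sum_range_succ]
      _ ≤ a * (Fintype.card k + 1) := by nlinarith
end

section
/- For any d-tensor (multilinear map) P : V₁ × ⋯ × V_d → k over a field k with |k| ≥ d+2 and char(k) not dividing the relevant group orders, the rank and partition rank satisfy r(P) ≤ pr(P) ≤ 4^d · r(P). -/
open MvPolynomial

variable {k : Type*} [Field k] {d : ℕ} {n : Fin d → ℕ}

/-- The set of `r` such that the `d`-tensor `P` admits a decomposition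
`P = ∑_{j<r} Q_j · R_j` (as functions on `V₁ × ⋯ × V_d`), where `Q_j, R_j` are
polynomials of degree `< d` on the product space.  The rank `r(P)` is the
infimum of this set. -/
def tensorRankSet [Field k] (P : MultilinearMap k (fun i : Fin d => (Fin (n i) → k)) k) :
    Set ℕ :=
  {r | ∃ Q R : Fin r → MvPolynomial ((i : Fin d) × Fin (n i)) k,
    (∀ j, (Q j).totalDegree < d ∧ (R j).totalDegree < d) ∧
    ∀ x : (i : Fin d) → Fin (n i) → k,
      P x = ∑ j, MvPolynomial.eval (fun p => x p.1 p.2) (Q j) *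
                 MvPolynomial.eval (fun p => x p.1 p.2) (R j)}

/-- The set of `r` such that the `d`-tensor `P` admits a partition-rank
decomposition `P(x₁,…,x_d) = ∑_{j<r} Q_j((x_l)_{l∈J_j}) · R_j((x_l)_{l∉J_j})`
with `J_j` nonempty proper subsets of `[d]` and `Q_j, R_j` multilinear.
The partition rank `pr(P)` is the infimum of this set. -/
def tensorPRankSet [Field k] (P : MultilinearMap k (fun i : Fin d => (Fin (n i) → k)) k) :
    Set ℕ :=
  {r | ∃ (J : Fin r → Finset (Fin d))
      (Q : (j : Fin r) → MultilinearMap k (fun i : {i : Fin d // i ∈ J j} => (Fin (n i.1) → k)) k)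
      (R : (j : Fin r) → MultilinearMap k (fun i : {i : Fin d // i ∉ J j} => (Fin (n i.1) → k)) k),
    (∀ j, (J j).Nonempty ∧ J j ≠ Finset.univ) ∧
    ∀ x : (i : Fin d) → Fin (n i) → k,
      P x = ∑ j, Q j (fun i => x i.1) * R j (fun i => x i.1)}

/-!
If `P = ∑ⱼ Qⱼ Rⱼ` pointwise with `deg Qⱼ, deg Rⱼ < d`, then `P` is the function of the polynomial
`F = ∑ⱼ Qⱼ Rⱼ`, of degree `< 2d`. Rescaling each block `xᵢ ↦ c xᵢ` at `d + 1` nodes and averaging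
with the Lagrange weights that read off the linear coefficient of a polynomial of degree `≤ d`
reproduces `P`, since `P` is multilinear, while on `F` it keeps exactly the monomials that are
linear in every block: a monomial of degree `> d` in one block has total degree `< 2d`, so it misses
some other block and is killed there. Hence `P` is the multilinear part of `F`. The multilinear part
of `Qⱼ Rⱼ` is `∑_S Qⱼ^S(x_S) Rⱼ^{Sᶜ}(x_{Sᶜ})` over the sets `S` of blocks, where the terms
`S = ∅, [d]` vanish by the degree bounds; so `pr(P) ≤ (2^d - 2) r(P)`. Conversely, each term of a
partition-rank decomposition is a product of two polynomials of degree `< d`.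
-/

open Finset

namespace MvPolynomial

variable {R σ : Type*} [CommSemiring R]

noncomputable def scaleVars (a : σ → R) : MvPolynomial σ R →ₐ[R] MvPolynomial σ R :=
  aeval fun p => C (a p) * X p

theorem eval_scaleVars (a y : σ → R) (F : MvPolynomial σ R) :
    eval y (scaleVars a F) = eval (fun p => a p * y p) F := by
  induction F using MvPolynomial.induction_on with
  | C c => simp [scaleVars]
  | add F G hF hG => simp only [map_add, hF, hG]
  | mul_X F p hF => simp [map_mul, ← hF, scaleVars]

theorem scaleVars_monomial (a : σ → R) (m : σ →₀ ℕ) (c : R) :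
    scaleVars a (monomial m c) = monomial m ((m.prod fun p e => a p ^ e) * c) := by
  have hprod : (m.prod fun p e => (C (a p) * X p : MvPolynomial σ R) ^ e)
      = C (m.prod fun p e => a p ^ e) * m.prod fun p e => X p ^ e := by
    simp only [Finsupp.prod, mul_pow, prod_mul_distrib, map_prod, map_pow]
  rw [scaleVars, aeval_monomial, hprod, monomial_eq, algebraMap_eq, map_mul]
  ring

theorem coeff_scaleVars (a : σ → R) (F : MvPolynomial σ R) (m : σ →₀ ℕ) :
    coeff m (scaleVars a F) = (m.prod fun p e => a p ^ e) * coeff m F := by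
  classical
  induction F using MvPolynomial.induction_on' with
  | monomial n c =>
    rw [scaleVars_monomial, coeff_monomial, coeff_monomial]
    split_ifs with h
    · rw [h]
    · rw [mul_zero]
  | add F G hF hG => rw [map_add, coeff_add, coeff_add, hF, hG, mul_add]

end MvPolynomial

section Monomials

variable {ι : Type*} {κ : ι → Type*}

noncomputable def sigmaMonomial {α : Type*} [Fintype α] (e : α → ι) (g : (a : α) → κ (e a)) :
    (Σ i, κ i) →₀ ℕ :=
  ∑ a, Finsupp.single ⟨e a, g a⟩ 1

theorem sum_sigmaMonomial {α : Type*} [Fintype α] (e : α → ι) (g : (a : α) → κ (e a)) :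
    (sigmaMonomial e g).sum (fun _ n => n) = Fintype.card α := by
  rw [sigmaMonomial, ← Finsupp.sum_finsetSum_index (by simp) (by simp)]
  simp

theorem prod_sigmaMonomial {M α : Type*} [CommMonoid M] [Fintype α] (e : α → ι)
    (g : (a : α) → κ (e a)) (y : (Σ i, κ i) → M) :
    (sigmaMonomial e g).prod (fun p n => y p ^ n) = ∏ a, y ⟨e a, g a⟩ := by
  rw [sigmaMonomial, ← Finsupp.prod_finsetSum_index (fun _ => pow_zero _)
    (fun _ _ _ => pow_add _ _ _)]
  simp

noncomputable def blockMonomial (S : Finset ι) (f : (i : ι) → κ i) : (Σ i, κ i) →₀ ℕ :=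
  ∑ i ∈ S, Finsupp.single ⟨i, f i⟩ 1

def blockDegree [∀ i, Fintype (κ i)] (i : ι) (m : (Σ i, κ i) →₀ ℕ) : ℕ :=
  ∑ j, m ⟨i, j⟩

theorem blockMonomial_apply [DecidableEq ι] [∀ i, DecidableEq (κ i)] (S : Finset ι)
    (f : (i : ι) → κ i) (i : ι) (j : κ i) :
    blockMonomial S f ⟨i, j⟩ = if i ∈ S ∧ f i = j then 1 else 0 := by
  simp only [blockMonomial, Finsupp.finsetSum_apply, Finsupp.single_apply]
  split_ifs with h
  · rw [sum_eq_single_of_mem i h.1 (fun b _ hb => if_neg fun h' => hb (congrArg Sigma.fst h'))]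
    simp [h.2]
  · refine sum_eq_zero fun b hb => if_neg ?_
    intro h'
    obtain ⟨rfl, hfj⟩ := Sigma.mk.inj h'
    exact h ⟨hb, eq_of_heq hfj⟩

variable [Fintype ι]

theorem sum_blockMonomial_univ (f : (i : ι) → κ i) :
    (blockMonomial univ f).sum (fun _ n => n) = Fintype.card ι :=
  sum_sigmaMonomial id f

theorem prod_blockMonomial_univ {M : Type*} [CommMonoid M] (f : (i : ι) → κ i)
    (y : (Σ i, κ i) → M) :
    (blockMonomial univ f).prod (fun p n => y p ^ n) = ∏ i, y ⟨i, f i⟩ :=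
  prod_sigmaMonomial id f y

theorem sigmaMonomial_subtype_val (p : ι → Prop) [DecidablePred p]
    (f : (i : ι) → κ i) :
    sigmaMonomial (Subtype.val : Subtype p → ι) (fun i => f i) = blockMonomial (univ.filter p) f :=
  (sum_subtype (univ.filter p) (by simp) fun i =>
    (Finsupp.single ⟨i, f i⟩ 1 : (Σ i, κ i) →₀ ℕ)).symm

theorem sum_blockDegree [∀ i, Fintype (κ i)] (m : (Σ i, κ i) →₀ ℕ) :
    ∑ i, blockDegree i m = m.sum fun _ n => n := by
  rw [Finsupp.sum_fintype _ _ fun _ => rfl, ← univ_sigma_univ, sum_sigma]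
  rfl

theorem prod_pow_blockDegree [∀ i, Fintype (κ i)] {M : Type*} [CommMonoid M] (a : ι → M)
    (m : (Σ i, κ i) →₀ ℕ) :
    (m.prod fun p n => a p.1 ^ n) = ∏ i, a i ^ blockDegree i m := by
  rw [Finsupp.prod_fintype _ _ fun _ => pow_zero _, ← univ_sigma_univ, prod_sigma]
  simp [blockDegree, prod_pow_eq_pow_sum]

variable [DecidableEq ι] [∀ i, DecidableEq (κ i)]

theorem blockMonomial_univ_injective :
    Function.Injective (blockMonomial univ : ((i : ι) → κ i) → (Σ i, κ i) →₀ ℕ) := by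
  intro f g h
  funext i
  have := DFunLike.congr_fun h ⟨i, f i⟩
  simp only [blockMonomial_apply, mem_univ, true_and, if_true] at this
  by_contra hne
  simp [Ne.symm hne] at this

theorem eq_blockMonomial_of_add_eq_blockMonomial_univ {f : (i : ι) → κ i}
    {a b : (Σ i, κ i) →₀ ℕ} (hab : a + b = blockMonomial univ f) :
    a = blockMonomial (univ.filter fun i => a ⟨i, f i⟩ ≠ 0) f ∧
      b = blockMonomial (univ.filter fun i => a ⟨i, f i⟩ ≠ 0)ᶜ f := by
  have hval : ∀ i j, a ⟨i, j⟩ + b ⟨i, j⟩ = if f i = j then 1 else 0 := fun i j => by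
    simpa [blockMonomial_apply] using DFunLike.congr_fun hab ⟨i, j⟩
  constructor <;> ext ⟨i, j⟩ <;> have := hval i j <;> by_cases hj : f i = j
  all_goals first
    | (subst hj; simp only [blockMonomial_apply, mem_compl, mem_filter, mem_univ, true_and,
        and_true, if_true] at this ⊢; split_ifs <;> omega)
    | (simp only [blockMonomial_apply, hj, and_false, if_false] at this ⊢; omega)

theorem coeff_blockMonomial_univ_mul {R : Type*} [CommSemiring R] (f : (i : ι) → κ i)
    (A B : MvPolynomial (Σ i, κ i) R) :
    coeff (blockMonomial univ f) (A * B)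
      = ∑ S, coeff (blockMonomial S f) A * coeff (blockMonomial Sᶜ f) B := by
  rw [coeff_mul]
  refine sum_nbij' (fun ab => univ.filter fun i => ab.1 ⟨i, f i⟩ ≠ 0)
    (fun S => (blockMonomial S f, blockMonomial Sᶜ f)) (fun _ _ => mem_univ _) (fun S _ => ?_)
    (fun ab hab => ?_) (fun S _ => ?_) (fun ab hab => ?_)
  · rw [HasAntidiagonal.mem_antidiagonal, blockMonomial, blockMonomial, blockMonomial,
      sum_add_sum_compl]
  · obtain ⟨ha, hb⟩ := eq_blockMonomial_of_add_eq_blockMonomial_univ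
      (HasAntidiagonal.mem_antidiagonal.mp hab)
    exact Prod.ext ha.symm hb.symm
  · ext i
    simp [blockMonomial_apply]
  · obtain ⟨ha, hb⟩ := eq_blockMonomial_of_add_eq_blockMonomial_univ
      (HasAntidiagonal.mem_antidiagonal.mp hab)
    rw [← ha, ← hb]

variable [∀ i, Fintype (κ i)]

theorem blockDegree_blockMonomial_univ (f : (i : ι) → κ i) (i : ι) :
    blockDegree i (blockMonomial univ f) = 1 := by
  simp [blockDegree, blockMonomial_apply]

theorem exists_eq_blockMonomial_univ {m : (Σ i, κ i) →₀ ℕ} (hm : ∀ i, blockDegree i m = 1) :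
    ∃ f, m = blockMonomial univ f := by
  have hpos : ∀ i, ∃ j, m ⟨i, j⟩ ≠ 0 := fun i => by
    by_contra! h
    simpa [blockDegree, h] using hm i
  choose f hf using hpos
  have hle : ∀ i j, j ≠ f i → m ⟨i, j⟩ + m ⟨i, f i⟩ ≤ 1 := fun i j hj => by
    have := sum_le_sum_of_subset (f := fun j => m ⟨i, j⟩) (subset_univ {j, f i})
    rwa [sum_pair hj, ← blockDegree, hm i] at this
  have hone : ∀ i, m ⟨i, f i⟩ ≤ 1 := fun i =>
    hm i ▸ single_le_sum (f := fun j => m ⟨i, j⟩) (fun _ _ => Nat.zero_le _) (mem_univ _)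
  refine ⟨f, Finsupp.ext fun ⟨i, j⟩ => ?_⟩
  rw [blockMonomial_apply]
  have := hf i
  by_cases hj : j = f i
  · subst hj
    have := hone i
    simp only [mem_univ, true_and, if_true]
    omega
  · have := hle i j hj
    simp only [mem_univ, true_and, Ne.symm hj, if_false]
    omega

end Monomials

theorem exists_sum_mul_pow_eq_ite {K : Type*} [Field K] {D : ℕ} {c : Fin (D + 1) → K}
    (hc : Function.Injective c) (n : ℕ) :
    ∃ w : Fin (D + 1) → K, ∀ e ≤ D, ∑ u, w u * c u ^ e = if e = n then 1 else 0 := by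
  refine ⟨fun u => (Lagrange.basis univ c u).coeff n, fun e he => ?_⟩
  have hdeg : (Polynomial.X ^ e : Polynomial K).degree < #(univ : Finset (Fin (D + 1))) := by
    rw [Polynomial.degree_X_pow, card_univ, Fintype.card_fin]
    exact_mod_cast Nat.lt_succ_of_le he
  have h := congrArg (Polynomial.coeff · n) (Lagrange.eq_interpolate hc.injOn hdeg)
  simp only [Lagrange.interpolate_apply, Polynomial.coeff_X_pow, Polynomial.finsetSum_coeff,
    Polynomial.coeff_C_mul, Polynomial.eval_pow, Polynomial.eval_X] at h
  calc ∑ u, (Lagrange.basis univ c u).coeff n * c u ^ e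
      = ∑ u, c u ^ e * (Lagrange.basis univ c u).coeff n := sum_congr rfl fun _ _ => mul_comm _ _
    _ = if e = n then 1 else 0 := by rw [← h]; exact if_congr eq_comm rfl rfl

theorem prod_eq_ite_of_sum_le {ι M : Type*} [Fintype ι] [CommMonoidWithZero M]
    (φ : ℕ → M) (hφ : ∀ n ≤ Fintype.card ι, φ n = if n = 1 then 1 else 0) (e : ι → ℕ)
    (he : ∑ i, e i ≤ 2 * Fintype.card ι - 1) :
    ∏ i, φ (e i) = if ∀ i, e i = 1 then 1 else 0 := by
  classical
  by_cases hsmall : ∀ i, e i ≤ Fintype.card ι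
  · simp_rw [hφ _ (hsmall _), Fintype.prod_boole]
  push Not at hsmall
  obtain ⟨i₀, hi₀⟩ := hsmall
  -- `e i₀` alone exceeds the degree budget left for the other blocks, so one of them is empty.
  obtain ⟨i₁, hi₁⟩ : ∃ i₁, e i₁ = 0 := by
    by_contra! hpos
    have hrest : Fintype.card ι - 1 ≤ ∑ i ∈ univ.erase i₀, e i := by
      simpa [card_erase_of_mem] using
        card_nsmul_le_sum (univ.erase i₀) e 1 fun i _ => Nat.one_le_iff_ne_zero.mpr (hpos i)
    have := add_sum_erase univ e (mem_univ i₀)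
    omega
  rw [if_neg fun h => by have := h i₀; have := Fintype.card_pos_iff.2 ⟨i₀⟩; omega]
  exact prod_eq_zero (mem_univ i₁) (by rw [hi₁, hφ 0 (Nat.zero_le _)]; simp)

section Extraction

variable {ι : Type*} [Fintype ι] [DecidableEq ι] {κ : ι → Type*}

noncomputable def blockAverage {R : Type*} [CommSemiring R] {D : ℕ} (c w : Fin D → R)
    (F : MvPolynomial (Σ i, κ i) R) : MvPolynomial (Σ i, κ i) R :=
  ∑ t : ι → Fin D, C (∏ i, w (t i)) * scaleVars (fun p => c (t p.1)) F

theorem eval_blockAverage {R : Type*} [CommSemiring R] {D : ℕ} (c w : Fin D → R)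
    (P : MultilinearMap R (fun i => κ i → R) R) {F : MvPolynomial (Σ i, κ i) R}
    (hPF : ∀ x, P x = eval (fun p => x p.1 p.2) F) (x : (i : ι) → κ i → R) :
    eval (fun p => x p.1 p.2) (blockAverage c w F)
      = (∑ u, w u * c u) ^ Fintype.card ι * P x := by
  have hterm : ∀ t : ι → Fin D,
      eval (fun p => c (t p.1) * x p.1 p.2) F = (∏ i, c (t i)) * P x := fun t => by
    rw [← smul_eq_mul, ← P.map_smul_univ, hPF]
    rfl
  rw [← card_univ, ← prod_const, prod_univ_sum, Fintype.piFinset_univ, sum_mul]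
  simp only [blockAverage, _root_.map_sum, eval_mul, eval_C, eval_scaleVars, hterm, ← mul_assoc,
    prod_mul_distrib]

variable [∀ i, Fintype (κ i)]

theorem coeff_blockAverage {R : Type*} [CommSemiring R] {D : ℕ} (c w : Fin D → R)
    (F : MvPolynomial (Σ i, κ i) R) (m : (Σ i, κ i) →₀ ℕ) :
    coeff m (blockAverage c w F) = (∏ i, ∑ u, w u * c u ^ blockDegree i m) * coeff m F := by
  rw [blockAverage, coeff_sum, prod_univ_sum, Fintype.piFinset_univ, sum_mul]
  refine sum_congr rfl fun t _ => ?_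
  rw [coeff_C_mul, coeff_scaleVars, prod_pow_blockDegree (fun i => c (t i)), prod_mul_distrib]
  ring

variable [∀ i, DecidableEq (κ i)]

theorem eval_eq_sum_coeff_blockMonomial {R : Type*} [CommSemiring R]
    (G : MvPolynomial (Σ i, κ i) R) (hG : ∀ m ∈ G.support, ∀ i, blockDegree i m = 1)
    (x : (i : ι) → κ i → R) :
    eval (fun p => x p.1 p.2) G = ∑ f, coeff (blockMonomial univ f) G * ∏ i, x i (f i) := by
  have hsupp : G.support ⊆ univ.image (blockMonomial univ) := fun m hm =>
    let ⟨f, hf⟩ := exists_eq_blockMonomial_univ (hG m hm)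
    mem_image.mpr ⟨f, mem_univ f, hf.symm⟩
  rw [eval_eq, sum_subset hsupp fun m _ hm => by rw [notMem_support_iff.mp hm, zero_mul],
    sum_image fun f _ g _ h => blockMonomial_univ_injective h]
  exact sum_congr rfl fun f _ => congrArg _ (prod_blockMonomial_univ f fun p => x p.1 p.2)

theorem MultilinearMap.apply_eq_sum_coeff_blockMonomial {K : Type*} [Field K]
    (hK : ∃ s : Finset K, Fintype.card ι + 1 ≤ #s)
    (P : MultilinearMap K (fun i => κ i → K) K) (F : MvPolynomial (Σ i, κ i) K)
    (hF : F.totalDegree ≤ 2 * Fintype.card ι - 1)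
    (hPF : ∀ x, P x = eval (fun p => x p.1 p.2) F) (x : (i : ι) → κ i → K) :
    P x = ∑ f, coeff (blockMonomial univ f) F * ∏ i, x i (f i) := by
  set D := Fintype.card ι
  obtain ⟨c, hc⟩ : ∃ c : Fin (D + 1) → K, Function.Injective c := by
    obtain ⟨s, hs⟩ := hK
    obtain ⟨t, -, ht⟩ := exists_subset_card_eq hs
    exact ⟨fun u => ((equivFinOfCardEq ht).symm u : K),
      Subtype.val_injective.comp (equivFinOfCardEq ht).symm.injective⟩
  obtain ⟨w, hw⟩ := exists_sum_mul_pow_eq_ite hc 1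
  have hH : ∀ m, coeff m (blockAverage c w F) =
      if ∀ i, blockDegree i m = 1 then coeff m F else 0 := by
    intro m
    by_cases hm : coeff m F = 0
    · simp [coeff_blockAverage, hm]
    have hdeg : ∑ i, blockDegree i m ≤ 2 * D - 1 :=
      sum_blockDegree m ▸ (le_totalDegree (mem_support_iff.mpr hm)).trans hF
    rw [coeff_blockAverage, prod_eq_ite_of_sum_le _ hw _ hdeg, ite_mul, one_mul, zero_mul]
  have hone : (∑ u, w u * c u) ^ D = 1 := by
    rcases Nat.eq_zero_or_pos D with hD | hD
    · simp only [hD, pow_zero]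
    · simpa using congrArg (· ^ D) (hw 1 hD)
  rw [← one_mul (P x), ← hone, ← eval_blockAverage c w P hPF,
    eval_eq_sum_coeff_blockMonomial _ (fun m hm i => ?_)]
  · simp [hH, blockDegree_blockMonomial_univ]
  · by_contra h
    rw [mem_support_iff, hH, if_neg fun h' => h (h' i)] at hm
    exact hm rfl

end Extraction

section MultilinearCoeff

variable {R : Type*} [CommSemiring R] {ι : Type*} [Fintype ι] [DecidableEq ι] {κ : ι → Type*}
  [∀ i, Fintype (κ i)]

noncomputable def MultilinearMap.ofCoeff (c : ((i : ι) → κ i) → R) :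
    MultilinearMap R (fun i => κ i → R) R :=
  ∑ f, c f • (MultilinearMap.mkPiAlgebra R ι R).compLinearMap fun i => LinearMap.proj (f i)

theorem MultilinearMap.ofCoeff_apply (c : ((i : ι) → κ i) → R) (x : (i : ι) → κ i → R) :
    ofCoeff c x = ∑ f, c f * ∏ i, x i (f i) := by
  simp [ofCoeff]

variable [∀ i, DecidableEq (κ i)]

theorem MultilinearMap.eq_ofCoeff (Q : MultilinearMap R (fun i => κ i → R) R) :
    Q = ofCoeff fun f => Q fun i => Pi.single (f i) 1 := by
  refine MultilinearMap.ext fun x => ?_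
  have hx : x = fun i => ∑ j, x i j • (Pi.single j 1 : κ i → R) := by
    funext i
    simp [← Pi.single_smul', univ_sum_single]
  conv_lhs => rw [hx, Q.map_sum]
  rw [ofCoeff_apply]
  refine sum_congr rfl fun f _ => ?_
  rw [Q.map_smul_univ, smul_eq_mul, mul_comm]

end MultilinearCoeff

section Polynomial

variable {R : Type*} [CommSemiring R] {ι : Type*} {κ : ι → Type*} [∀ i, Fintype (κ i)]
  [∀ i, DecidableEq (κ i)]

theorem MultilinearMap.exists_totalDegree_le_eval_eq {α : Type*} [Fintype α] [DecidableEq α]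
    (e : α → ι) (Q : MultilinearMap R (fun a => κ (e a) → R) R) :
    ∃ G : MvPolynomial (Σ i, κ i) R, G.totalDegree ≤ Fintype.card α ∧
      ∀ x : (i : ι) → κ i → R, eval (fun p => x p.1 p.2) G = Q fun a => x (e a) := by
  refine ⟨∑ g, monomial (sigmaMonomial e g) (Q fun a => Pi.single (g a) 1), ?_, fun x => ?_⟩
  · refine (totalDegree_finsetSum _ _).trans (Finset.sup_le fun g _ => ?_)
    exact (totalDegree_monomial_le _ _).trans (sum_sigmaMonomial e g).le
  · conv_rhs => rw [Q.eq_ofCoeff, ofCoeff_apply]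
    rw [_root_.map_sum]
    exact sum_congr rfl fun g _ => by rw [eval_monomial, prod_sigmaMonomial]

end Polynomial

section Splitting

variable {R : Type*} [CommSemiring R] {ι : Type*} [Fintype ι] [DecidableEq ι] {κ : ι → Type*}
  [∀ i, Fintype (κ i)]

noncomputable def MvPolynomial.multilinearPart (p : ι → Prop) [DecidablePred p]
    (A : MvPolynomial (Σ i, κ i) R) : MultilinearMap R (fun i : Subtype p => κ i → R) R :=
  MultilinearMap.ofCoeff fun g => coeff (sigmaMonomial Subtype.val g) A

theorem multilinearPart_mul_multilinearPart_not (p : ι → Prop) [DecidablePred p]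
    (A B : MvPolynomial (Σ i, κ i) R) (x : (i : ι) → κ i → R) :
    multilinearPart p A (fun i => x i) * multilinearPart (¬p ·) B (fun i => x i)
      = ∑ f, coeff (blockMonomial (univ.filter p) f) A *
          coeff (blockMonomial (univ.filter (¬p ·)) f) B * ∏ i, x i (f i) := by
  rw [multilinearPart, multilinearPart, MultilinearMap.ofCoeff_apply,
    MultilinearMap.ofCoeff_apply, sum_mul_sum, ← Fintype.sum_prod_type',
    ← (Equiv.piEquivPiSubtypeProd p κ).sum_comp]
  refine sum_congr rfl fun f _ => ?_
  simp only [Equiv.piEquivPiSubtypeProd_apply, sigmaMonomial_subtype_val,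
    ← Fintype.prod_subtype_mul_prod_subtype p fun i => x i (f i)]
  ring

variable [∀ i, DecidableEq (κ i)]

theorem sum_coeff_blockMonomial_univ_mul {A B : MvPolynomial (Σ i, κ i) R}
    (hA : A.totalDegree < Fintype.card ι) (hB : B.totalDegree < Fintype.card ι)
    (x : (i : ι) → κ i → R) :
    ∑ f, coeff (blockMonomial univ f) (A * B) * ∏ i, x i (f i)
      = ∑ S ∈ univ.filter fun S : Finset ι => S.Nonempty ∧ S ≠ univ,
          multilinearPart (· ∈ S) A (fun i => x i) * multilinearPart (· ∉ S) B (fun i => x i) := by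
  have hfull : ∀ (f : (i : ι) → κ i) (C : MvPolynomial (Σ i, κ i) R),
      C.totalDegree < Fintype.card ι → coeff (blockMonomial univ f) C = 0 := fun f C hC =>
    coeff_eq_zero_of_totalDegree_lt (hC.trans_eq (sum_blockMonomial_univ f).symm)
  have htrivial : ∀ f, ∀ S ∉ univ.filter fun S : Finset ι => S.Nonempty ∧ S ≠ univ,
      coeff (blockMonomial S f) A * coeff (blockMonomial Sᶜ f) B = 0 := fun f S hS => by
    rw [mem_filter, not_and, not_and_or, not_not, not_nonempty_iff_eq_empty] at hS
    rcases hS (mem_univ S) with rfl | rfl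
    · rw [compl_empty, hfull f B hB, mul_zero]
    · rw [hfull f A hA, zero_mul]
  simp_rw [coeff_blockMonomial_univ_mul,
    ← sum_subset (subset_univ _) fun S _ hS => htrivial _ S hS, sum_mul]
  rw [sum_comm]
  refine sum_congr rfl fun S _ => ?_
  have hfilter : univ.filter (· ∈ S) = S ∧ univ.filter (· ∉ S) = Sᶜ := by
    simp [Finset.ext_iff]
  rw [multilinearPart_mul_multilinearPart_not, hfilter.1, hfilter.2]

theorem MultilinearMap.apply_eq_sum_multilinearPart {K T : Type*} [Field K] [Fintype T]
    (hK : ∃ s : Finset K, Fintype.card ι + 1 ≤ #s) (P : MultilinearMap K (fun i => κ i → K) K)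
    (A B : T → MvPolynomial (Σ i, κ i) K)
    (hdeg : ∀ t, (A t).totalDegree < Fintype.card ι ∧ (B t).totalDegree < Fintype.card ι)
    (hP : ∀ x, P x = ∑ t, eval (fun p => x p.1 p.2) (A t) * eval (fun p => x p.1 p.2) (B t))
    (x : (i : ι) → κ i → K) :
    P x = ∑ t, ∑ S ∈ univ.filter fun S : Finset ι => S.Nonempty ∧ S ≠ univ,
      multilinearPart (· ∈ S) (A t) (fun i => x i) *
        multilinearPart (· ∉ S) (B t) (fun i => x i) := by
  have hdegF : (∑ t, A t * B t).totalDegree ≤ 2 * Fintype.card ι - 1 := by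
    refine (totalDegree_finsetSum _ _).trans (Finset.sup_le fun t _ => ?_)
    have := totalDegree_mul (A t) (B t)
    have := hdeg t
    omega
  rw [P.apply_eq_sum_coeff_blockMonomial hK _ hdegF
    (fun x => by simp only [hP x, _root_.map_sum, eval_mul]) x]
  simp_rw [coeff_sum, sum_mul]
  rw [sum_comm]
  exact sum_congr rfl fun t _ => sum_coeff_blockMonomial_univ_mul (hdeg t).1 (hdeg t).2 x

end Splitting

theorem Nat.sInf_le_sInf_and_sInf_le_mul_sInf {A B : Set ℕ} {c : ℕ} (hAB : A ⊆ B)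
    (hBA : ∀ b ∈ B, ∃ a ∈ A, a ≤ c * b) : sInf B ≤ sInf A ∧ sInf A ≤ c * sInf B := by
  rcases B.eq_empty_or_nonempty with rfl | hB
  · simp [Set.subset_empty_iff.mp hAB]
  obtain ⟨a, ha, hle⟩ := hBA _ (Nat.sInf_mem hB)
  exact ⟨Nat.sInf_le (hAB (Nat.sInf_mem ⟨a, ha⟩)), (Nat.sInf_le ha).trans hle⟩

theorem tensorPRankSet_subset_tensorRankSet
    (P : MultilinearMap k (fun i : Fin d => (Fin (n i) → k)) k) :
    tensorPRankSet P ⊆ tensorRankSet P := by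
  rintro r ⟨J, Q, R, hJ, hP⟩
  choose G hGdeg hG using fun j =>
    (Q j).exists_totalDegree_le_eval_eq (κ := fun i => Fin (n i)) Subtype.val
  choose G' hG'deg hG' using fun j =>
    (R j).exists_totalDegree_le_eval_eq (κ := fun i => Fin (n i)) Subtype.val
  refine ⟨G, G', fun j => ⟨(hGdeg j).trans_lt ?_, (hG'deg j).trans_lt ?_⟩, fun x => ?_⟩
  · simpa using ((J j).card_lt_iff_ne_univ.mpr (hJ j).2)
  · obtain ⟨i, hi⟩ := (hJ j).1
    simpa using Fintype.card_subtype_lt (p := (· ∉ J j)) (not_not.mpr hi)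
  · simp only [hP x, hG, hG']

theorem card_mem_tensorPRankSet {T : Type*} [Fintype T]
    (P : MultilinearMap k (fun i : Fin d => (Fin (n i) → k)) k) (J : T → Finset (Fin d))
    (hJ : ∀ t, (J t).Nonempty ∧ J t ≠ Finset.univ)
    (Q : (t : T) → MultilinearMap k (fun i : {i : Fin d // i ∈ J t} => (Fin (n i.1) → k)) k)
    (R : (t : T) → MultilinearMap k (fun i : {i : Fin d // i ∉ J t} => (Fin (n i.1) → k)) k)
    (hP : ∀ x, P x = ∑ t, Q t (fun i => x i.1) * R t (fun i => x i.1)) :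
    Fintype.card T ∈ tensorPRankSet P := by
  let e := (Fintype.equivFin T).symm
  exact ⟨J ∘ e, fun j => Q (e j), fun j => R (e j), fun j => hJ (e j),
    fun x => by rw [hP x, ← e.sum_comp]; rfl⟩

theorem exists_mem_tensorPRankSet_le (hk : ∃ s : Finset k, d + 2 ≤ s.card)
    (P : MultilinearMap k (fun i : Fin d => (Fin (n i) → k)) k) {r : ℕ}
    (hr : r ∈ tensorRankSet P) : ∃ r' ∈ tensorPRankSet P, r' ≤ 2 ^ d * r := by
  obtain ⟨Q, R, hdeg, hP⟩ := hr
  set 𝒮 := univ.filter fun S : Finset (Fin d) => S.Nonempty ∧ S ≠ univ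
  have hK : ∃ s : Finset k, Fintype.card (Fin d) + 1 ≤ #s := by
    obtain ⟨s, hs⟩ := hk
    exact ⟨s, by rw [Fintype.card_fin]; omega⟩
  have hexp : ∀ x, P x = ∑ t : Fin r × 𝒮, multilinearPart (· ∈ (t.2 : Finset (Fin d))) (Q t.1)
      (fun i => x i.1) * multilinearPart (· ∉ (t.2 : Finset (Fin d))) (R t.1) (fun i => x i.1) := by
    intro x
    rw [P.apply_eq_sum_multilinearPart hK Q R (by simpa using hdeg) hP x, Fintype.sum_prod_type]
    exact sum_congr rfl fun j _ => (sum_coe_sort 𝒮 _).symm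
  refine ⟨Fintype.card (Fin r × 𝒮), ?_, ?_⟩
  · exact card_mem_tensorPRankSet P (fun t => t.2) (fun t => (mem_filter.mp t.2.2).2)
      (fun t => multilinearPart (· ∈ (t.2 : Finset (Fin d))) (Q t.1))
      (fun t => multilinearPart (· ∉ (t.2 : Finset (Fin d))) (R t.1)) hexp
  calc Fintype.card (Fin r × 𝒮) = r * #𝒮 := by
        rw [Fintype.card_prod, Fintype.card_fin, Fintype.card_coe]
    _ ≤ r * 2 ^ d := Nat.mul_le_mul_left r ((card_filter_le _ _).trans (by simp))
    _ = 2 ^ d * r := mul_comm _ _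

/-- For a `d`-tensor `P : V₁ × ⋯ × V_d → k` over a field with
`|k| ≥ d+2`, the rank and partition rank satisfy `r(P) ≤ pr(P) ≤ 4^d · r(P)`. -/
theorem stmt8 (hk : ∃ s : Finset k, d + 2 ≤ s.card)
    (P : MultilinearMap k (fun i : Fin d => (Fin (n i) → k)) k) :
    sInf (tensorRankSet P) ≤ sInf (tensorPRankSet P) ∧
    sInf (tensorPRankSet P) ≤ 4 ^ d * sInf (tensorRankSet P) := by
  refine Nat.sInf_le_sInf_and_sInf_le_mul_sInf (tensorPRankSet_subset_tensorRankSet P)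
    fun r hr => ?_
  obtain ⟨r', hr', hle⟩ := exists_mem_tensorPRankSet_le hk P hr
  exact ⟨r', hr', hle.trans (Nat.mul_le_mul_right r (Nat.pow_le_pow_left (by norm_num) d))⟩
end
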